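/- arXiv:2109.01598 — 2 statements merged into one kernel-verified Lean document; each statement's English description precedes it below -/
import Mathlib

section
/- If E is a rank r Ulrich bundle on a very general polarized K3 surface of genus g ≥ 2 with Pic(X) = ℤH, then r is even, c_1(E) = (3r/2)H, and ∫_X s_2(E) = (9r²/4)(g-1) + 2r(g-2) > 0. -/
/-- **Ulrich bundles on a very general K3 have even rank and big Segre number.**
Let `E` be a rank `r ≥ 1` Ulrich bundle on a very general polarized K3 surface of genus
`g ≥ 2` with `Pic(X) = ℤH`, so `c₁(E) = λH` for some `λ ∈ ℤ`.  The Ulrich identities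
give `λ·(2g-2) = 3r(g-1)` (from `∫c₁(E)·H = 3r(g-1)`) and
`2·(∫c₂(E)) = λ²(2g-2) - 4r(g-2)` (from `∫(c₁(E)² - 2c₂(E)) = 4r(g-2)`).
Then `r` is even with `c₁(E) = (3r/2)H` (i.e. `r = 2a`, `λ = 3a` for some `a`), and
`∫ s₂(E) = λ²(2g-2) - ∫c₂(E)` satisfies `4·∫s₂(E) = 9r²(g-1) + 8r(g-2)`
(that is, `∫s₂(E) = (9r²/4)(g-1) + 2r(g-2)`) and is strictly positive. -/
theorem ulrich_even_rank_and_segre (r g lam c2 : ℤ) (hr : 1 ≤ r) (hg : 2 ≤ g)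
    (hc1H : lam * (2 * g - 2) = 3 * r * (g - 1))
    (hc2 : 2 * c2 = lam ^ 2 * (2 * g - 2) - 4 * r * (g - 2)) :
    (∃ a : ℤ, r = 2 * a ∧ lam = 3 * a) ∧
    4 * (lam ^ 2 * (2 * g - 2) - c2) = 9 * r ^ 2 * (g - 1) + 8 * r * (g - 2) ∧
    0 < lam ^ 2 * (2 * g - 2) - c2 := by
  have hg1 : g - 1 ≠ 0 := by omega
  have key : 2 * lam = 3 * r := by
    have h : (2 * lam - 3 * r) * (g - 1) = 0 := by ring_nf; linarith [hc1H]
    rcases mul_eq_zero.1 h with h' | h'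
    · omega
    · omega
  have hrev : ∃ a : ℤ, r = 2 * a ∧ lam = 3 * a := by
    refine ⟨lam - r, by omega, by omega⟩
  refine ⟨hrev, ?_, ?_⟩
  · obtain ⟨a, ha, hla⟩ := hrev
    subst ha; subst hla
    nlinarith [hc2]
  · obtain ⟨a, ha, hla⟩ := hrev
    have ha1 : 1 ≤ a := by omega
    nlinarith [hc2, sq_nonneg a, mul_pos (by omega : (0:ℤ) < a) (by omega : (0:ℤ) < g - 1)]
end

section
/- Let X be a smooth projective surface, G a globally generated vector bundle of rank r on X, and L a (k-1)-very ample line bundle on X (k ≥ 2). Then G ⊗ L is (k-1)-very ample on X. -/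
/-- **Global generation ⊗ (k-1)-very ampleness ⇒ (k-1)-very ampleness.**
Let `X` be a smooth projective surface, `G` a globally generated vector bundle on `X`
and `L` a `(k-1)`-very ample line bundle (`k ≥ 2`).  We encode a length-`k`
zero-dimensional subscheme `ξ ⊂ X` by its structure algebra `O = H⁰(O_ξ)` (a
`k`-dimensional ℂ-algebra) together with the restriction modules
`MG = H⁰(G ⊗ O_ξ)`, `ML = H⁰(L ⊗ O_ξ)`, `MGL = H⁰(G ⊗ L ⊗ O_ξ)` over `O`, the
ℂ-linear evaluation maps `evG`, `evL`, `evGL` of global sections `SecG = H⁰(X,G)`,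
`SecL = H⁰(X,L)`, `SecGL = H⁰(X, G⊗L)`, the multiplication of sections
`μ : H⁰(G) → H⁰(L) → H⁰(G⊗L)`, which is `O`-bilinear on restrictions
(`evGL (μ g l) = evG g • evL l` via the module pairing `tens`).  Assume:
`L` is trivial on `ξ` (`ML ≅ O`), `(G⊗L)|_ξ = G|_ξ ⊗_O L|_ξ` (via `tens`),
`G` is globally generated (so by Nakayama its sections generate `MG` over `O`), and
`L` is `(k-1)`-very ample (i.e. `evL` is surjective).  Then `G ⊗ L` is
`(k-1)`-very ample, i.e. the evaluation `evGL : H⁰(G⊗L) → H⁰(G⊗L⊗O_ξ)` is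
surjective — for every such `ξ`. -/
theorem tensor_kVeryAmple
    (k r : ℕ) (hk : 2 ≤ k) (hr : 1 ≤ r)
    {SecG SecL SecGL : Type*}
    [AddCommGroup SecG] [Module ℂ SecG]
    [AddCommGroup SecL] [Module ℂ SecL]
    [AddCommGroup SecGL] [Module ℂ SecGL]
    (μ : SecG →ₗ[ℂ] SecL →ₗ[ℂ] SecGL)
    -- data of an arbitrary length-k zero-dimensional subscheme ξ ⊂ X :
    (O : Type*) [CommRing O] [Algebra ℂ O]
    (hO : Module.finrank ℂ O = k)
    (MG ML MGL : Type*)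
    [AddCommGroup MG] [Module O MG] [Module ℂ MG] [IsScalarTower ℂ O MG]
    [AddCommGroup ML] [Module O ML] [Module ℂ ML] [IsScalarTower ℂ O ML]
    [AddCommGroup MGL] [Module O MGL] [Module ℂ MGL] [IsScalarTower ℂ O MGL]
    (evG : SecG →ₗ[ℂ] MG) (evL : SecL →ₗ[ℂ] ML) (evGL : SecGL →ₗ[ℂ] MGL)
    -- G|_ξ is free of rank r and L|_ξ is trivial (L is a line bundle):
    (eG : MG ≃ₗ[O] (Fin r → O)) (eL : ML ≃ₗ[O] O)
    -- (G ⊗ L)|_ξ is the tensor product of the restrictions: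
    (tens : MG →ₗ[O] ML →ₗ[O] MGL)
    (htens : Function.Bijective (TensorProduct.lift tens))
    -- compatibility of restriction with multiplication of sections:
    (hcompat : ∀ (g : SecG) (l : SecL), evGL (μ g l) = tens (evG g) (evL l))
    -- G is globally generated: its sections generate every restriction G|_ξ :
    (hGgg : Submodule.span O (Set.range evG) = ⊤)
    -- L is (k-1)-very ample: evaluation on ξ is surjective:
    (hLva : Function.Surjective evL) :
    Function.Surjective evGL := by
  classical
  set S : Submodule ℂ MGL := LinearMap.range evGL with hS
  have step1 : ∀ (g : SecG) (n : ML), tens (evG g) n ∈ S := by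
    intro g n
    obtain ⟨l, rfl⟩ := hLva n
    exact ⟨μ g l, hcompat g l⟩
  let T : Submodule O MG :=
    { carrier := {m | ∀ n : ML, tens m n ∈ S}
      add_mem' := by
        intro a b ha hb n
        simpa [map_add] using S.add_mem (ha n) (hb n)
      zero_mem' := by
        intro n
        simpa using S.zero_mem
      smul_mem' := by
        intro a m hm n
        have h : tens (a • m) n = tens m (a • n) := by
          simp [map_smul]
        rw [h]
        exact hm _ }
  have hT : ∀ m : MG, m ∈ T := by
    have hle : Submodule.span O (Set.range evG) ≤ T := by
      rw [Submodule.span_le]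
      rintro _ ⟨g, rfl⟩
      exact step1 g
    intro m
    exact hle (hGgg ▸ Submodule.mem_top)
  have main : ∀ t : TensorProduct O MG ML, TensorProduct.lift tens t ∈ S := by
    intro t
    induction t using TensorProduct.induction_on with
    | zero => simpa using S.zero_mem
    | tmul m n => simpa using hT m n
    | add a b ha hb => simpa [map_add] using S.add_mem ha hb
  intro x
  obtain ⟨t, rfl⟩ := htens.2 x
  exact main t
end
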